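/- arXiv:1612.01001 — 3 statements merged into one kernel-verified Lean document; each statement's English description precedes it below -/
import Mathlib

section
/- Let G be a locally compact group and H a closed cocompact subgroup of G (i.e. there is a compact subset C of G with G = H·C). If H has Property PL, then G has Property PL; likewise, if H has strong Property PL, then G has strong Property PL. -/
open scoped NNReal Topology

/-- A semigroup length on a topological group: nonnegative, bounded on compact
subsets, and subadditive. -/
def IsSemigroupLength {G : Type*} [Group G] [TopologicalSpace G] (L : G → ℝ) : Prop :=
  (∀ x, 0 ≤ L x) ∧ (∀ K : Set G, IsCompact K → ∃ M : ℝ, ∀ x ∈ K, L x ≤ M) ∧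
    (∀ x y, L (x * y) ≤ L x + L y)

/-- A length is a symmetric semigroup length. -/
def IsLength {G : Type*} [Group G] [TopologicalSpace G] (L : G → ℝ) : Prop :=
  IsSemigroupLength L ∧ ∀ x, L x = L x⁻¹

/-- A length is proper if all its sublevel sets have compact closure. -/
def IsProperLength {G : Type*} [Group G] [TopologicalSpace G] (L : G → ℝ) : Prop :=
  ∀ c : ℝ, IsCompact (closure {x : G | L x ≤ c})

/-- Property PL: every length is either bounded or proper. -/
def HasPL (G : Type*) [Group G] [TopologicalSpace G] : Prop :=
  ∀ L : G → ℝ, IsLength L → (∃ M : ℝ, ∀ x, L x ≤ M) ∨ IsProperLength L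

/-- Strong Property PL: every semigroup length is either bounded or proper. -/
def HasStrongPL (G : Type*) [Group G] [TopologicalSpace G] : Prop :=
  ∀ L : G → ℝ, IsSemigroupLength L → (∃ M : ℝ, ∀ x, L x ≤ M) ∨ IsProperLength L

/-
Write `G = H * C` with `C` compact. If `L` is bounded by `M` on `H` and by `M'` on `C`, then
`L ≤ M + M'` on `G`. If instead `L` is proper on `H`, let `M'` bound `L` on `C⁻¹`: from
`L h ≤ L (h * c) + L c⁻¹` every `g = h * c` with `L g ≤ r` has `L h ≤ r + M'`, so the sublevel
set `{L ≤ r}` lies in the compact set `(closure {h ∈ H | L h ≤ r + M'}) * C`.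
-/

open scoped Pointwise

section Comp

variable {G K : Type*} [Group G] [TopologicalSpace G] [Group K] [TopologicalSpace K] {L : K → ℝ}

lemma IsSemigroupLength.comp (hL : IsSemigroupLength L) (f : G →* K) (hf : Continuous f) :
    IsSemigroupLength (L ∘ f) := by
  obtain ⟨hnonneg, hbdd, hsub⟩ := hL
  refine ⟨fun x => hnonneg _, fun S hS => ?_, fun x y => by simpa using hsub (f x) (f y)⟩
  obtain ⟨M, hM⟩ := hbdd _ (hS.image hf)
  exact ⟨M, fun x hx => hM _ (Set.mem_image_of_mem f hx)⟩

lemma IsLength.comp (hL : IsLength L) (f : G →* K) (hf : Continuous f) : IsLength (L ∘ f) :=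
  ⟨hL.1.comp f hf, fun x => by simpa using hL.2 (f x)⟩

end Comp

namespace IsSemigroupLength

variable {G : Type*} [Group G] [TopologicalSpace G] {L : G → ℝ} {H : Subgroup G} {C : Set G}

lemma bddAbove_of_bddAbove_subgroup (hL : IsSemigroupLength L) (hC : IsCompact C)
    (hcov : ∀ g : G, ∃ h ∈ H, ∃ c ∈ C, g = h * c) (hH : ∃ M : ℝ, ∀ x : H, L x ≤ M) :
    ∃ M : ℝ, ∀ x, L x ≤ M := by
  obtain ⟨M, hM⟩ := hH
  obtain ⟨M', hM'⟩ := hL.2.1 C hC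
  refine ⟨M + M', fun g => ?_⟩
  obtain ⟨h, hh, c, hc, rfl⟩ := hcov g
  exact (hL.2.2 h c).trans (add_le_add (hM ⟨h, hh⟩) (hM' c hc))

variable [IsTopologicalGroup G]

lemma isProperLength_of_isProperLength_subgroup (hL : IsSemigroupLength L) (hC : IsCompact C)
    (hcov : ∀ g : G, ∃ h ∈ H, ∃ c ∈ C, g = h * c)
    (hH : IsProperLength (fun h : H => L h)) : IsProperLength L := by
  intro r
  obtain ⟨M', hM'⟩ := hL.2.1 C⁻¹ hC.inv
  have hsublevel : {x : G | L x ≤ r} ⊆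
      (Subtype.val '' closure {x : H | L x ≤ r + M'}) * C := by
    intro g hg
    obtain ⟨h, hh, c, hc, rfl⟩ := hcov g
    have hLh : L h ≤ r + M' :=
      calc L h = L (h * c * c⁻¹) := by rw [mul_inv_cancel_right]
        _ ≤ L (h * c) + L c⁻¹ := hL.2.2 _ _
        _ ≤ r + M' := add_le_add hg (hM' _ (Set.inv_mem_inv.mpr hc))
    exact Set.mul_mem_mul ⟨⟨h, hh⟩, subset_closure hLh, rfl⟩ hc
  have hcompact := (((hH (r + M')).image continuous_subtype_val).mul hC).closure
  exact hcompact.of_isClosed_subset isClosed_closure (closure_mono hsublevel)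

lemma bddAbove_or_isProperLength_of_subgroup (hL : IsSemigroupLength L) (hC : IsCompact C)
    (hcov : ∀ g : G, ∃ h ∈ H, ∃ c ∈ C, g = h * c)
    (hH : (∃ M : ℝ, ∀ x : H, L x ≤ M) ∨ IsProperLength (fun h : H => L h)) :
    (∃ M : ℝ, ∀ x, L x ≤ M) ∨ IsProperLength L :=
  hH.imp (hL.bddAbove_of_bddAbove_subgroup hC hcov)
    (hL.isProperLength_of_isProperLength_subgroup hC hcov)

end IsSemigroupLength

theorem stmt_7_general {G : Type*} [Group G] [TopologicalSpace G] [IsTopologicalGroup G]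
    (H : Subgroup G)
    (hco : ∃ C : Set G, IsCompact C ∧ ∀ g : G, ∃ h ∈ H, ∃ c ∈ C, g = h * c) :
    (HasPL H → HasPL G) ∧ (HasStrongPL H → HasStrongPL G) := by
  obtain ⟨C, hC, hcov⟩ := hco
  refine ⟨fun hH L hL => ?_, fun hH L hL => ?_⟩
  · exact hL.1.bddAbove_or_isProperLength_of_subgroup hC hcov
      (hH _ (hL.comp H.subtype continuous_subtype_val))
  · exact hL.bddAbove_or_isProperLength_of_subgroup hC hcov
      (hH _ (hL.comp H.subtype continuous_subtype_val))

/-- if a closed cocompact subgroup `H` of a locally compact group `G`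
has (strong) Property PL, then so does `G`. -/
theorem stmt_7 {G : Type*} [Group G] [TopologicalSpace G] [IsTopologicalGroup G]
    [LocallyCompactSpace G] (H : Subgroup G) (hHcl : IsClosed (H : Set G))
    (hco : ∃ C : Set G, IsCompact C ∧ ∀ g : G, ∃ h ∈ H, ∃ c ∈ C, g = h * c) :
    (HasPL H → HasPL G) ∧ (HasStrongPL H → HasStrongPL G) :=
  stmt_7_general H hco
end

section
/- Let n ≥ 2 and let L : ℝⁿ → [0,∞) (ℝⁿ with its Euclidean norm) be a function such that: L(x + y) ≤ L(x) + L(y) for all x, y; L(x) depends only on ‖x‖ (i.e. L(x) = L(y) whenever ‖x‖ = ‖y‖); L is bounded on every bounded subset of ℝⁿ; and there exists a sequence (aᵢ) in ℝⁿ with ‖aᵢ‖ → ∞ and sup_i L(aᵢ) < ∞. Then L is bounded on ℝⁿ. -/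
open Module RealInnerProductSpace

variable {E : Type*} [NormedAddCommGroup E] [InnerProductSpace ℝ E]

theorem exists_norm_eq_one_inner_eq_zero (hE : 2 ≤ finrank ℝ E) (x : E) :
    ∃ w : E, ‖w‖ = 1 ∧ ⟪x, w⟫ = 0 := by
  have : FiniteDimensional ℝ E := Module.finite_of_finrank_pos (by omega)
  have hker : LinearMap.ker (innerₗ E x) ≠ ⊥ :=
    LinearMap.ker_ne_bot_of_finrank_lt (by rw [finrank_self]; omega)
  obtain ⟨w, hw, hw0⟩ := Submodule.exists_mem_ne_zero_of_ne_bot hker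
  refine ⟨‖w‖⁻¹ • w, norm_smul_inv_norm hw0, ?_⟩
  rw [real_inner_smul_right, show ⟪x, w⟫ = 0 from hw, mul_zero]

theorem exists_add_eq_norm_eq_norm_eq (hE : 2 ≤ finrank ℝ E) {x : E} {r : ℝ} (hx : ‖x‖ ≤ r) :
    ∃ u v : E, u + v = x ∧ ‖u‖ = r ∧ ‖v‖ = r := by
  obtain ⟨w, hw, hxw⟩ := exists_norm_eq_one_inner_eq_zero hE x
  set y : E := (1 / 2 : ℝ) • x
  have hyw : ⟪y, w⟫ = 0 := by rw [real_inner_smul_left, hxw, mul_zero]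
  have hr : 0 ≤ r := (norm_nonneg x).trans hx
  have hy : ‖y‖ ^ 2 ≤ r ^ 2 := by
    have : ‖y‖ ≤ r := by simp only [y, norm_smul]; norm_num; linarith [norm_nonneg x]
    gcongr
  -- Pythagoras, since `w ⟂ y`
  have on_sphere : ∀ s : ℝ, s ^ 2 = r ^ 2 - ‖y‖ ^ 2 → ‖y + s • w‖ = r := by
    intro s hs
    have pyth := norm_add_sq_eq_norm_sq_add_norm_sq_real
      (show ⟪y, s • w⟫ = 0 by rw [real_inner_smul_right, hyw, mul_zero])
    rw [norm_smul s w, hw, mul_one, Real.norm_eq_abs, abs_mul_abs_self] at pyth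
    nlinarith [norm_nonneg (y + s • w)]
  set t := √(r ^ 2 - ‖y‖ ^ 2)
  have ht : t ^ 2 = r ^ 2 - ‖y‖ ^ 2 := Real.sq_sqrt (by linarith)
  exact ⟨y + t • w, y + (-t) • w, by module, on_sphere t ht, on_sphere (-t) (by rw [neg_sq, ht])⟩

theorem le_two_mul_of_subadditive_of_norm_le (hE : 2 ≤ finrank ℝ E) {L : E → ℝ}
    (hsub : ∀ x y, L (x + y) ≤ L x + L y) (hrot : ∀ x y, ‖x‖ = ‖y‖ → L x = L y)
    {x a : E} (hx : ‖x‖ ≤ ‖a‖) : L x ≤ 2 * L a := by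
  obtain ⟨u, v, rfl, hu, hv⟩ := exists_add_eq_norm_eq_norm_eq hE hx
  calc L (u + v) ≤ L u + L v := hsub u v
    _ = 2 * L a := by rw [hrot u a hu, hrot v a hv]; ring

theorem stmt_9_general (n : ℕ) (hn : 2 ≤ n) (L : EuclideanSpace ℝ (Fin n) → ℝ)
    (hsub : ∀ x y, L (x + y) ≤ L x + L y)
    (hrot : ∀ x y, ‖x‖ = ‖y‖ → L x = L y)
    (a : ℕ → EuclideanSpace ℝ (Fin n))
    (ha : Filter.Tendsto (fun i => ‖a i‖) Filter.atTop Filter.atTop)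
    (hLa : ∃ M : ℝ, ∀ i, L (a i) ≤ M) :
    ∃ M : ℝ, ∀ x, L x ≤ M := by
  obtain ⟨M, hM⟩ := hLa
  refine ⟨2 * M, fun x => ?_⟩
  obtain ⟨i, hi⟩ := (ha.eventually_ge_atTop ‖x‖).exists
  have hE : 2 ≤ finrank ℝ (EuclideanSpace ℝ (Fin n)) := by rwa [finrank_euclideanSpace_fin]
  linarith [le_two_mul_of_subadditive_of_norm_le hE hsub hrot hi, hM i]

/-- a subadditive, rotation-invariant, locally bounded function on
Euclidean `ℝⁿ` (`n ≥ 2`) which is bounded along some sequence going to infinity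
is bounded. -/
theorem stmt_9 (n : ℕ) (hn : 2 ≤ n) (L : EuclideanSpace ℝ (Fin n) → ℝ)
    (hnonneg : ∀ x, 0 ≤ L x)
    (hsub : ∀ x y, L (x + y) ≤ L x + L y)
    (hrot : ∀ x y, ‖x‖ = ‖y‖ → L x = L y)
    (hbdd : ∀ B : Set (EuclideanSpace ℝ (Fin n)), Bornology.IsBounded B →
      ∃ M : ℝ, ∀ x ∈ B, L x ≤ M)
    (a : ℕ → EuclideanSpace ℝ (Fin n))
    (ha : Filter.Tendsto (fun i => ‖a i‖) Filter.atTop Filter.atTop)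
    (hLa : ∃ M : ℝ, ∀ i, L (a i) ≤ M) :
    ∃ M : ℝ, ∀ x, L x ≤ M :=
  stmt_9_general n hn L hsub hrot a ha hLa
end

section
/- Let K be a nontrivially normed field that is locally compact (e.g. ℝ, ℂ, or ℚ_p). Then SL(2, K), with its topology as a subset of the 2×2 matrices over K, has strong Property PL: every semigroup length on SL(2, K) is either bounded or proper. -/
open scoped NNReal Topology

/-- The topology on `SL(n, K)` induced from the space of `n × n` matrices. -/
instance sltop (n : ℕ) (K : Type*) [CommRing K] [TopologicalSpace K] :
    TopologicalSpace (Matrix.SpecialLinearGroup (Fin n) K) :=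
  instTopologicalSpaceSubtype

/-!
If some sublevel set `{L ≤ c}` contains matrices with arbitrarily large entries, move the largest
entry of such a matrix to the corner with Weyl elements and clear the off-diagonal entries with
elementary matrices from the unit ball: this gives `diag a = diag(a, a⁻¹)` of bounded length with
`‖a‖` arbitrarily large. Since `upper t = diag a * upper (t / a²) * (diag a)⁻¹` and `(diag a)⁻¹` is
a Weyl conjugate of `diag a`, every `upper t` has bounded length; so do their Weyl conjugates
`lower t`, and, through `g = upper * lower * upper`, all of `SL(2, K)`. Otherwise every sublevel
set has bounded entries, hence compact closure, `SL(2, K)` being closed in the proper space of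
matrices.
-/

open scoped MatrixGroups

namespace IsSemigroupLength

variable {G : Type*} [Group G] [TopologicalSpace G] {L : G → ℝ}

lemma nonneg (hL : IsSemigroupLength L) (x : G) : 0 ≤ L x := hL.1 x

lemma map_mul_le (hL : IsSemigroupLength L) (x y : G) : L (x * y) ≤ L x + L y := hL.2.2 x y

lemma map_mul_mul_le (hL : IsSemigroupLength L) (x y z : G) :
    L (x * y * z) ≤ L x + L y + L z :=
  (hL.map_mul_le _ z).trans (by linarith [hL.map_mul_le x y])

end IsSemigroupLength

lemma Matrix.SpecialLinearGroup.isCompact_closure_of_forall_norm_apply_le {n : Type*} [Fintype n]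
    [DecidableEq n] {K : Type*} [NormedCommRing K] [ProperSpace K]
    {S : Set (Matrix.SpecialLinearGroup n K)} {R : ℝ} (hS : ∀ g ∈ S, ∀ i j, ‖g i j‖ ≤ R) :
    IsCompact (closure S) := by
  have hT : IsCompact ((↑) ⁻¹' Set.univ.pi fun _ => Set.univ.pi fun _ => Metric.closedBall 0 R :
      Set (Matrix.SpecialLinearGroup n K)) :=
    isClosedEmbedding_val.isCompact_preimage <|
      isCompact_univ_pi fun _ => isCompact_univ_pi fun _ => isCompact_closedBall 0 R
  refine hT.of_isClosed_subset isClosed_closure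
    (closure_minimal (fun g hg i _ j _ => ?_) hT.isClosed)
  simpa using hS g hg i j

namespace SL2

open Matrix

section Algebra

variable {K : Type*} [Field K]

def upper (t : K) : SL(2, K) := ⟨!![1, t; 0, 1], by simp [det_fin_two_of]⟩

def lower (t : K) : SL(2, K) := ⟨!![1, 0; t, 1], by simp [det_fin_two_of]⟩

def weyl : SL(2, K) := ⟨!![0, 1; -1, 0], by simp [det_fin_two_of]⟩

def diag : Kˣ →* SL(2, K) where
  toFun a := ⟨!![(a : K), 0; 0, (a⁻¹ : Kˣ)], by simp [det_fin_two_of]⟩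
  map_one' := by ext i j; fin_cases i <;> fin_cases j <;> simp
  map_mul' a b := by
    apply Subtype.ext
    change _ = !![(a : K), 0; 0, (a⁻¹ : Kˣ)] * !![(b : K), 0; 0, (b⁻¹ : Kˣ)]
    simp [mul_comm]

@[simp] lemma coe_upper (t : K) : (upper t : Matrix (Fin 2) (Fin 2) K) = !![1, t; 0, 1] := rfl
@[simp] lemma coe_lower (t : K) : (lower t : Matrix (Fin 2) (Fin 2) K) = !![1, 0; t, 1] := rfl
@[simp] lemma coe_weyl : ((weyl : SL(2, K)) : Matrix (Fin 2) (Fin 2) K) = !![0, 1; -1, 0] := rfl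
@[simp] lemma coe_diag (a : Kˣ) :
    (diag a : Matrix (Fin 2) (Fin 2) K) = !![(a : K), 0; 0, (a⁻¹ : Kˣ)] := rfl

@[simp] lemma coe_weyl_inv :
    ((weyl⁻¹ : SL(2, K)) : Matrix (Fin 2) (Fin 2) K) = !![0, -1; 1, 0] := by
  simp [Matrix.SpecialLinearGroup.coe_inv, adjugate_fin_two]

lemma upper_zero : upper (0 : K) = 1 := by
  ext i j; fin_cases i <;> fin_cases j <;> simp

lemma weyl_mul_upper_mul_weyl_inv (t : K) : weyl * upper t * weyl⁻¹ = lower (-t) := by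
  ext : 1
  simp [Matrix.SpecialLinearGroup.coe_mul]

lemma weyl_mul_diag_mul_weyl_inv (a : Kˣ) : weyl * diag a * weyl⁻¹ = diag a⁻¹ := by
  ext : 1
  simp [Matrix.SpecialLinearGroup.coe_mul]

lemma diag_mul_upper_mul_diag_inv (a : Kˣ) (t : K) :
    diag a * upper t * (diag a)⁻¹ = upper ((a : K) ^ 2 * t) := by
  rw [← map_inv]
  ext i j
  fin_cases i <;> fin_cases j <;> simp [Matrix.SpecialLinearGroup.coe_mul]
  ring

lemma det_eq (g : SL(2, K)) : g 0 0 * g 1 1 - g 0 1 * g 1 0 = 1 := by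
  have := g.2
  rwa [det_fin_two] at this

lemma lower_mul_mul_upper_eq_diag (g : SL(2, K)) (ha : g 0 0 ≠ 0) :
    lower (-(g 1 0 / g 0 0)) * g * upper (-(g 0 1 / g 0 0)) = diag (Units.mk0 _ ha) := by
  have hdet := det_eq g
  ext i j
  fin_cases i <;> fin_cases j <;>
    simp [Matrix.SpecialLinearGroup.coe_mul, mul_apply, vecMul, dotProduct, Fin.sum_univ_two] <;>
    grind

lemma eq_upper_mul_lower_mul_upper (g : SL(2, K)) (hc : g 1 0 ≠ 0) :
    g = upper ((g 0 0 - 1) / g 1 0) * lower (g 1 0) * upper ((g 1 1 - 1) / g 1 0) := by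
  have hdet := det_eq g
  ext i j
  fin_cases i <;> fin_cases j <;>
    simp [Matrix.SpecialLinearGroup.coe_mul, mul_apply, Fin.sum_univ_two] <;> grind

lemma weyl_mul_apply_one_zero (g : SL(2, K)) : (weyl * g : SL(2, K)) 1 0 = - g 0 0 := by
  simp [Matrix.SpecialLinearGroup.coe_mul, mul_apply, Fin.sum_univ_two]

end Algebra

section Norm

variable {K : Type*} [NormedField K]

lemma exists_mul_mul_apply_zero_zero_dominant (g : SL(2, K)) :
    ∃ x ∈ ({1, weyl} : Set SL(2, K)), ∃ y ∈ ({1, weyl} : Set SL(2, K)),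
      ∀ i j, ‖g i j‖ ≤ ‖(x * g * y) 0 0‖ ∧ ‖(x * g * y) i j‖ ≤ ‖(x * g * y) 0 0‖ := by
  obtain ⟨⟨i₀, j₀⟩, hmax⟩ := Finite.exists_max fun p : Fin 2 × Fin 2 => ‖g p.1 p.2‖
  have hle : ∀ i j, ‖g i j‖ ≤ ‖g i₀ j₀‖ := fun i j => hmax (i, j)
  refine ⟨if i₀ = 0 then 1 else weyl, by split_ifs <;> simp,
    if j₀ = 0 then 1 else weyl, by split_ifs <;> simp, fun i j => ?_⟩
  fin_cases i₀ <;> fin_cases j₀ <;> fin_cases i <;> fin_cases j <;>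
    simp_all [Matrix.SpecialLinearGroup.coe_mul, mul_apply, vecMul, dotProduct, Fin.sum_univ_two]

lemma apply_zero_zero_ne_zero (g : SL(2, K)) (h : ∀ i j, ‖g i j‖ ≤ ‖g 0 0‖) : g 0 0 ≠ 0 := by
  intro h0
  have hzero : ∀ i j, g i j = 0 := fun i j => norm_le_zero_iff.mp (by simpa [h0] using h i j)
  simpa [hzero] using det_eq g

end Norm

section Length

variable {K : Type*} [NormedField K]

variable (K) in
def unitBallGenerators : Set SL(2, K) :=
  upper '' Metric.closedBall 0 1 ∪ lower '' Metric.closedBall 0 1 ∪ {weyl, weyl⁻¹}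

lemma continuous_upper : Continuous (upper : K → SL(2, K)) :=
  Continuous.subtype_mk (continuous_matrix fun i j => by
    fin_cases i <;> fin_cases j <;> simp [continuous_const, continuous_id']) _

lemma continuous_lower : Continuous (lower : K → SL(2, K)) :=
  Continuous.subtype_mk (continuous_matrix fun i j => by
    fin_cases i <;> fin_cases j <;> simp [continuous_const, continuous_id']) _

lemma isCompact_unitBallGenerators [ProperSpace K] : IsCompact (unitBallGenerators K) :=
  ((isCompact_closedBall 0 1).image continuous_upper).union
    ((isCompact_closedBall 0 1).image continuous_lower)
    |>.union (Set.toFinite _).isCompact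

lemma upper_mem_unitBallGenerators {t : K} (ht : ‖t‖ ≤ 1) : upper t ∈ unitBallGenerators K :=
  .inl (.inl ⟨t, by simpa using ht, rfl⟩)

lemma lower_mem_unitBallGenerators {t : K} (ht : ‖t‖ ≤ 1) : lower t ∈ unitBallGenerators K :=
  .inl (.inr ⟨t, by simpa using ht, rfl⟩)

lemma weyl_mem_unitBallGenerators : weyl ∈ unitBallGenerators K := .inr (.inl rfl)

lemma weyl_inv_mem_unitBallGenerators : weyl⁻¹ ∈ unitBallGenerators K := .inr (.inr rfl)

lemma one_mem_unitBallGenerators : 1 ∈ unitBallGenerators K :=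
  upper_zero (K := K) ▸ upper_mem_unitBallGenerators (by simp)

variable {L : SL(2, K) → ℝ} {M : ℝ}

lemma exists_length_diag_le (hL : IsSemigroupLength L)
    (hM : ∀ x ∈ unitBallGenerators K, L x ≤ M) (g : SL(2, K)) :
    ∃ a : Kˣ, (∀ i j, ‖g i j‖ ≤ ‖(a : K)‖) ∧ L (diag a) ≤ L g + 4 * M := by
  obtain ⟨x, hx, y, hy, hdom⟩ := exists_mul_mul_apply_zero_zero_dominant g
  set g' := x * g * y
  have hgen : ∀ z ∈ ({1, weyl} : Set SL(2, K)), L z ≤ M := by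
    rintro z (rfl | rfl)
    exacts [hM _ one_mem_unitBallGenerators, hM _ weyl_mem_unitBallGenerators]
  have ha : g' 0 0 ≠ 0 := apply_zero_zero_ne_zero g' fun i j => (hdom i j).2
  have hnorm : 0 < ‖g' 0 0‖ := norm_pos_iff.2 ha
  have hsmall : ∀ i j, ‖-(g' i j / g' 0 0)‖ ≤ 1 := fun i j => by
    rw [norm_neg, norm_div]
    exact div_le_one_of_le₀ (hdom i j).2 hnorm.le
  refine ⟨Units.mk0 _ ha, fun i j => (hdom i j).1, ?_⟩
  rw [← lower_mul_mul_upper_eq_diag g' ha]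
  calc L (lower (-(g' 1 0 / g' 0 0)) * g' * upper (-(g' 0 1 / g' 0 0)))
      ≤ L (lower (-(g' 1 0 / g' 0 0))) + L g' + L (upper (-(g' 0 1 / g' 0 0))) :=
        hL.map_mul_mul_le _ _ _
    _ ≤ M + (M + L g + M) + M := by
        gcongr
        · exact hM _ (lower_mem_unitBallGenerators (hsmall 1 0))
        · exact (hL.map_mul_mul_le x g y).trans (by gcongr <;> exact hgen _ ‹_›)
        · exact hM _ (upper_mem_unitBallGenerators (hsmall 0 1))
    _ = L g + 4 * M := by ring

lemma length_upper_le_of_length_diag_le (hL : IsSemigroupLength L)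
    (hM : ∀ x ∈ unitBallGenerators K, L x ≤ M) (a : Kˣ) {t : K} (ht : ‖t‖ ≤ ‖(a : K)‖ ^ 2) :
    L (upper t) ≤ 2 * L (diag a) + 3 * M := by
  have hinv : L (diag a⁻¹) ≤ M + L (diag a) + M := by
    rw [← weyl_mul_diag_mul_weyl_inv]
    refine (hL.map_mul_mul_le _ _ _).trans ?_
    gcongr
    exacts [hM _ weyl_mem_unitBallGenerators, hM _ weyl_inv_mem_unitBallGenerators]
  have hsmall : ‖t / (a : K) ^ 2‖ ≤ 1 := by
    rw [norm_div, norm_pow]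
    exact div_le_one_of_le₀ ht (by positivity)
  have hconj : upper t = diag a * upper (t / (a : K) ^ 2) * diag a⁻¹ := by
    rw [map_inv, diag_mul_upper_mul_diag_inv, mul_div_cancel₀ _ (pow_ne_zero _ a.ne_zero)]
  rw [hconj]
  linarith [hL.map_mul_mul_le (diag a) (upper (t / (a : K) ^ 2)) (diag a⁻¹),
    hM _ (upper_mem_unitBallGenerators hsmall)]

lemma length_upper_le_of_unbounded (hL : IsSemigroupLength L)
    (hM : ∀ x ∈ unitBallGenerators K, L x ≤ M) {c : ℝ}
    (hc : ∀ R, ∃ g : SL(2, K), L g ≤ c ∧ ∃ i j, R < ‖g i j‖) (t : K) :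
    L (upper t) ≤ 2 * c + 11 * M := by
  obtain ⟨g, hgc, i, j, hij⟩ := hc (max 1 ‖t‖)
  obtain ⟨a, hga, hda⟩ := exists_length_diag_le hL hM g
  have ha : max 1 ‖t‖ ≤ ‖(a : K)‖ := hij.le.trans (hga i j)
  have ht : ‖t‖ ≤ ‖(a : K)‖ ^ 2 := by
    nlinarith [le_max_left 1 ‖t‖, le_max_right 1 ‖t‖]
  linarith [length_upper_le_of_length_diag_le hL hM a ht]

variable {B : ℝ}

lemma length_lower_le (hL : IsSemigroupLength L) (hM : ∀ x ∈ unitBallGenerators K, L x ≤ M)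
    (hU : ∀ t, L (upper t) ≤ B) (t : K) : L (lower t) ≤ B + 2 * M := by
  rw [← neg_neg t, ← weyl_mul_upper_mul_weyl_inv]
  linarith [hL.map_mul_mul_le weyl (upper (-t)) weyl⁻¹, hU (-t),
    hM _ weyl_mem_unitBallGenerators, hM _ weyl_inv_mem_unitBallGenerators]

lemma length_le_of_apply_one_zero_ne_zero (hL : IsSemigroupLength L)
    (hM : ∀ x ∈ unitBallGenerators K, L x ≤ M) (hU : ∀ t, L (upper t) ≤ B) {g : SL(2, K)}
    (hc : g 1 0 ≠ 0) : L g ≤ 3 * B + 2 * M := by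
  have hg := congrArg L (eq_upper_mul_lower_mul_upper g hc)
  linarith [hL.map_mul_mul_le (upper ((g 0 0 - 1) / g 1 0)) (lower (g 1 0))
    (upper ((g 1 1 - 1) / g 1 0)), hU ((g 0 0 - 1) / g 1 0), hU ((g 1 1 - 1) / g 1 0),
    length_lower_le hL hM hU (g 1 0)]

lemma length_le_of_length_upper_le (hL : IsSemigroupLength L)
    (hM : ∀ x ∈ unitBallGenerators K, L x ≤ M) (hU : ∀ t, L (upper t) ≤ B) (g : SL(2, K)) :
    L g ≤ 3 * B + 3 * M := by
  have hM₀ : 0 ≤ M := (hL.nonneg _).trans (hM _ weyl_mem_unitBallGenerators)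
  by_cases hc : g 1 0 = 0
  · have hwg : (weyl * g : SL(2, K)) 1 0 ≠ 0 := by
      rw [weyl_mul_apply_one_zero, neg_ne_zero]
      intro h0
      simpa [h0, hc] using det_eq g
    calc L g = L (weyl⁻¹ * (weyl * g)) := by rw [inv_mul_cancel_left]
      _ ≤ M + (3 * B + 2 * M) := (hL.map_mul_le _ _).trans <| add_le_add
          (hM _ weyl_inv_mem_unitBallGenerators) (length_le_of_apply_one_zero_ne_zero hL hM hU hwg)
      _ = 3 * B + 3 * M := by ring
  · linarith [length_le_of_apply_one_zero_ne_zero hL hM hU hc]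

end Length

end SL2

/-- for a nontrivially normed, locally compact field `K`, the group
`SL(2, K)` has strong Property PL. -/
theorem stmt_13 (K : Type*) [NontriviallyNormedField K] [LocallyCompactSpace K] :
    HasStrongPL (Matrix.SpecialLinearGroup (Fin 2) K) := by
  have : ProperSpace K := .of_nontriviallyNormedField_of_weaklyLocallyCompactSpace K
  intro L hL
  by_cases hbdd : ∀ c : ℝ, ∃ R : ℝ, ∀ g : SL(2, K), L g ≤ c → ∀ i j, ‖g i j‖ ≤ R
  · refine .inr fun c => ?_
    obtain ⟨R, hR⟩ := hbdd c
    exact Matrix.SpecialLinearGroup.isCompact_closure_of_forall_norm_apply_le hR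
  · push Not at hbdd
    obtain ⟨c, hc⟩ := hbdd
    obtain ⟨M, hM⟩ := hL.2.1 _ SL2.isCompact_unitBallGenerators
    exact .inl ⟨_, SL2.length_le_of_length_upper_le hL hM
      (SL2.length_upper_le_of_unbounded hL hM hc)⟩
end
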